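/- Let X be a compact, locally connected metric space and p : X̃ → X a covering map. Then p admits an overlay structure, and any two overlay structures on p are equivalent. -/

import Mathlib

/-- The data exhibiting `p : E → X` as a covering map: an open cover `{U_α}` of `X`,
with `p⁻¹(U_α)` a disjoint union of open sets `U_α^λ` each mapped homeomorphically
onto `U_α` by `p`. -/
structure CoverData {E X : Type} [TopologicalSpace E] [TopologicalSpace X]
    (p : E → X) : Type 1 where
  ι : Type
  base : ι → Set X
  base_open : ∀ a, IsOpen (base a)
  base_cover : ∀ x : X, ∃ a, x ∈ base a
  Λ : ι → Type
  sheet : ∀ a, Λ a → Set E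
  sheet_open : ∀ a l, IsOpen (sheet a l)
  sheet_disjoint : ∀ a, ∀ l l' : Λ a, l ≠ l' → Disjoint (sheet a l) (sheet a l')
  sheet_preimage : ∀ a, p ⁻¹' (base a) = ⋃ l, sheet a l
  sheet_homeo : ∀ a l, ∃ e : (sheet a l) ≃ₜ (base a),
    ∀ z : (sheet a l), (e z : X) = p z

/-- An overlay structure on a covering map: an indexed cover `{U_α^λ}` of the total
space lying over an open cover of the base, such that whenever `U_α^λ ∩ U_β^μ ≠ ∅`
and `U_α^λ ∩ U_β^ν ≠ ∅` one has `μ = ν`. -/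
structure OverlayStructure {E X : Type} [TopologicalSpace E] [TopologicalSpace X]
    (p : E → X) extends CoverData p : Type 1 where
  overlay : ∀ a b (l : Λ a) (μ ν : Λ b),
    (sheet a l ∩ sheet b μ).Nonempty → (sheet a l ∩ sheet b ν).Nonempty → μ = ν

/-- `O` refines `O'` (as covers of the total space) if every sheet of `O` is
contained in some sheet of `O'`. -/
def OverlayStructure.Refines {E X : Type} [TopologicalSpace E] [TopologicalSpace X]
    {p : E → X} (O O' : OverlayStructure p) : Prop :=
  ∀ a l, ∃ b m, O.sheet a l ⊆ O'.sheet b m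

/-- Two overlay structures on `p` are equivalent if some overlay structure on `p`
refines both of them. -/
def OverlayStructure.Equiv {E X : Type} [TopologicalSpace E] [TopologicalSpace X]
    {p : E → X} (O O' : OverlayStructure p) : Prop :=
  ∃ O'' : OverlayStructure p, O''.Refines O ∧ O''.Refines O'

/-!
Covering data make `p` a local homeomorphism, so over a connected open `V` inside a base set the
connected components of `p⁻¹(V)` are exactly the slices `U_b^λ ∩ p⁻¹(V)` of the sheets. Using a
Lebesgue number and local connectedness, cover `X` by connected open sets `V x` so small that any
two of them that meet lie together in one base set. The components of the `p⁻¹(V x)` then form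
covering data refining any two given ones, and they satisfy the overlay condition: a component
over `V x` and every component over `V y` that it meets are slices of one and the same sheet
over a base set containing `V x ∪ V y`.
-/

open Set Topology

theorem IsLocalHomeomorph.exists_homeomorph_of_bijOn {X Y : Type*} [TopologicalSpace X]
    [TopologicalSpace Y] {f : X → Y} (hf : IsLocalHomeomorph f) {s : Set X} {t : Set Y}
    (hs : IsOpen s) (hst : BijOn f s t) : ∃ e : s ≃ₜ t, ∀ x, (e x : Y) = f x :=
  ⟨(Equiv.ofBijective _ hst.bijective).toHomeomorphOfContinuousOpen
    (hf.continuous.restrict hst.mapsTo) (hf.isOpenMap.mapsToRestrict hs hst.mapsTo), fun _ => rfl⟩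

theorem exists_isOpen_isPreconnected_cover_pairwise_union_subset {X κ : Type*} [MetricSpace X]
    [CompactSpace X] [LocallyConnectedSpace X] {U : κ → Set X} (hUo : ∀ k, IsOpen (U k))
    (hU : ∀ x, ∃ k, x ∈ U k) :
    ∃ V : X → Set X, (∀ x, IsOpen (V x)) ∧ (∀ x, IsPreconnected (V x)) ∧ (∀ x, x ∈ V x) ∧
      ∀ x y, (V x ∩ V y).Nonempty → ∃ k, V x ∪ V y ⊆ U k := by
  obtain ⟨δ, hδ, hball⟩ := lebesgue_number_lemma_of_metric isCompact_univ hUo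
    fun x _ => mem_iUnion.2 (hU x)
  have hV : ∀ x, ∃ W, W ⊆ Metric.ball x (δ / 3) ∧ IsOpen W ∧ x ∈ W ∧ IsConnected W :=
    fun x => locallyConnectedSpace_iff_subsets_isOpen_isConnected.mp ‹_› x _
      (Metric.ball_mem_nhds x (by positivity))
  choose V hVball hVo hxV hVc using hV
  refine ⟨V, hVo, fun x => (hVc x).isPreconnected, hxV, fun x y ⟨q, hqx, hqy⟩ => ?_⟩
  obtain ⟨k, hk⟩ := hball x (mem_univ x)
  refine ⟨k, union_subset ((hVball x).trans ?_) fun w hw => hk ?_⟩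
  · exact (Metric.ball_subset_ball (by linarith)).trans hk
  · have h₁ := Metric.mem_ball.1 (hVball x hqx)
    have h₂ := Metric.mem_ball'.1 (hVball y hqy)
    have h₃ := Metric.mem_ball.1 (hVball y hw)
    calc dist w x ≤ dist w y + dist y q + dist q x := dist_triangle4 w y q x
      _ < δ := by linarith

theorem eq_connectedComponentIn_of_mem_image {α : Type*} [TopologicalSpace α] {F C : Set α}
    {w : α} (hC : C ∈ connectedComponentIn F '' F) (hw : w ∈ C) : C = connectedComponentIn F w := by
  obtain ⟨z, -, rfl⟩ := hC
  exact connectedComponentIn_eq hw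

namespace CoverData

variable {E X : Type} [TopologicalSpace E] [TopologicalSpace X] {p : E → X} (D : CoverData p)

theorem exists_mem_sheet {b : D.ι} {z : E} (hz : p z ∈ D.base b) : ∃ l, z ∈ D.sheet b l := by
  have hz' : z ∈ p ⁻¹' D.base b := hz
  simpa only [D.sheet_preimage b, mem_iUnion] using hz'

theorem isOpenEmbedding_domRestrict_sheet (b : D.ι) (l : D.Λ b) :
    IsOpenEmbedding ((D.sheet b l).domRestrict p) := by
  obtain ⟨e, he⟩ := D.sheet_homeo b l
  have hpe : (D.sheet b l).domRestrict p = Subtype.val ∘ e := funext fun z => (he z).symm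
  rw [hpe]
  exact (D.base_open b).isOpenEmbedding_subtypeVal.comp e.isOpenEmbedding

theorem sheet_subset_preimage_base (b : D.ι) (l : D.Λ b) : D.sheet b l ⊆ p ⁻¹' D.base b :=
  (D.sheet_preimage b).symm ▸ subset_iUnion _ l

theorem injOn_sheet (b : D.ι) (l : D.Λ b) : InjOn p (D.sheet b l) :=
  injOn_iff_injective.2 (D.isOpenEmbedding_domRestrict_sheet b l).injective

theorem isLocalHomeomorph (D : CoverData p) : IsLocalHomeomorph p := by
  refine isLocalHomeomorph_iff_isOpenEmbedding_restrict.2 fun z => ?_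
  obtain ⟨b, hb⟩ := D.base_cover (p z)
  obtain ⟨l, hl⟩ := D.exists_mem_sheet hb
  exact ⟨_, (D.sheet_open b l).mem_nhds hl, D.isOpenEmbedding_domRestrict_sheet b l⟩

theorem subset_sheet {b : D.ι} {l : D.Λ b} {s : Set E} (hs : IsPreconnected s)
    (hsb : s ⊆ p ⁻¹' D.base b) (hsl : (s ∩ D.sheet b l).Nonempty) : s ⊆ D.sheet b l := by
  refine hs.subset_left_of_subset_union (D.sheet_open b l)
    (isOpen_biUnion fun l' (_ : l' ∈ ({l}ᶜ : Set (D.Λ b))) => D.sheet_open b l')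
    (disjoint_iUnion₂_right.2 fun l' hl' => D.sheet_disjoint b l l' (Ne.symm hl')) ?_ hsl
  intro z hz
  obtain ⟨m, hm⟩ := D.exists_mem_sheet (hsb hz)
  by_cases hml : m = l
  · exact Or.inl (hml ▸ hm)
  · exact Or.inr (mem_biUnion hml hm)

section

variable {V : Set X} {b : D.ι}

theorem exists_homeomorph_sheet_inter_preimage (l : D.Λ b) (hVo : IsOpen V)
    (hVb : V ⊆ D.base b) : ∃ h : ↥(D.sheet b l ∩ p ⁻¹' V) ≃ₜ V, ∀ z, (h z : X) = p z := by
  refine D.isLocalHomeomorph.exists_homeomorph_of_bijOn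
    ((D.sheet_open b l).inter (hVo.preimage D.isLocalHomeomorph.continuous))
    ⟨fun z hz => hz.2, (D.injOn_sheet b l).mono inter_subset_left, fun v hv => ?_⟩
  obtain ⟨e, he⟩ := D.sheet_homeo b l
  have hpv : p (e.symm ⟨v, hVb hv⟩) = v := by rw [← he, e.apply_symm_apply]
  exact ⟨e.symm ⟨v, hVb hv⟩, ⟨(e.symm _).2, by rwa [mem_preimage, hpv]⟩, hpv⟩

theorem isPreconnected_sheet_inter_preimage (l : D.Λ b) (hVo : IsOpen V)
    (hV : IsPreconnected V) (hVb : V ⊆ D.base b) : IsPreconnected (D.sheet b l ∩ p ⁻¹' V) := by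
  obtain ⟨h, -⟩ := D.exists_homeomorph_sheet_inter_preimage l hVo hVb
  have := isPreconnected_iff_preconnectedSpace.1 hV
  simpa only [range_comp, Homeomorph.range_coe, image_univ, Subtype.range_coe] using
    isPreconnected_range (continuous_subtype_val.comp h.symm.continuous)

theorem connectedComponentIn_preimage_eq {l : D.Λ b} (hVo : IsOpen V) (hV : IsPreconnected V)
    (hVb : V ⊆ D.base b) {z : E} (hz : p z ∈ V) (hzl : z ∈ D.sheet b l) :
    connectedComponentIn (p ⁻¹' V) z = D.sheet b l ∩ p ⁻¹' V := by
  refine subset_antisymm (subset_inter ?_ (connectedComponentIn_subset _ _)) ?_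
  · exact D.subset_sheet isPreconnected_connectedComponentIn
      ((connectedComponentIn_subset _ _).trans (preimage_mono hVb))
      ⟨z, mem_connectedComponentIn hz, hzl⟩
  · exact (D.isPreconnected_sheet_inter_preimage l hVo hV hVb).subset_connectedComponentIn
      ⟨hzl, hz⟩ inter_subset_right

theorem exists_eq_sheet_inter_preimage (hVo : IsOpen V) (hV : IsPreconnected V)
    (hVb : V ⊆ D.base b) {C : Set E} (hC : C ∈ connectedComponentIn (p ⁻¹' V) '' (p ⁻¹' V)) :
    ∃ l, C = D.sheet b l ∩ p ⁻¹' V := by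
  obtain ⟨z, hz, rfl⟩ := hC
  obtain ⟨l, hl⟩ := D.exists_mem_sheet (hVb hz)
  exact ⟨l, D.connectedComponentIn_preimage_eq hVo hV hVb hz hl⟩

end

section componentCover

variable {ι : Type} {V : ι → Set X} (hVo : ∀ i, IsOpen (V i)) (hVc : ∀ i, IsPreconnected (V i))
  (hVcover : ∀ x, ∃ i, x ∈ V i) (hVD : ∀ i, ∃ b, V i ⊆ D.base b)

def componentCover : CoverData p where
  ι := ι
  base := V
  base_open := hVo
  base_cover := hVcover
  Λ i := connectedComponentIn (p ⁻¹' V i) '' (p ⁻¹' V i)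
  sheet _ l := l
  sheet_open i l := by
    obtain ⟨b, hb⟩ := hVD i
    obtain ⟨m, hm⟩ := D.exists_eq_sheet_inter_preimage (hVo i) (hVc i) hb l.2
    rw [hm]
    exact (D.sheet_open b m).inter ((hVo i).preimage D.isLocalHomeomorph.continuous)
  sheet_disjoint _ l l' hne := disjoint_left.2 fun _ hw hw' => hne (Subtype.ext
    ((eq_connectedComponentIn_of_mem_image l.2 hw).trans
      (eq_connectedComponentIn_of_mem_image l'.2 hw').symm))
  sheet_preimage i := by
    refine subset_antisymm (fun z hz => mem_iUnion.2 ?_) (iUnion_subset fun l => ?_)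
    · exact ⟨⟨connectedComponentIn (p ⁻¹' V i) z, z, hz, rfl⟩, mem_connectedComponentIn hz⟩
    · obtain ⟨z, -, hz⟩ := l.2
      exact hz ▸ connectedComponentIn_subset _ _
  sheet_homeo i l := by
    obtain ⟨b, hb⟩ := hVD i
    obtain ⟨m, hm⟩ := D.exists_eq_sheet_inter_preimage (hVo i) (hVc i) hb l.2
    rw [hm]
    exact D.exists_homeomorph_sheet_inter_preimage m (hVo i) hb

theorem componentCover_sheet_eq (D' : CoverData p) {i : ι}
    (l : (D.componentCover hVo hVc hVcover hVD).Λ i) {b : D'.ι} (hb : V i ⊆ D'.base b)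
    {m : D'.Λ b} {z : E} (hz : z ∈ (D.componentCover hVo hVc hVcover hVD).sheet i l)
    (hzm : z ∈ D'.sheet b m) :
    (D.componentCover hVo hVc hVcover hVD).sheet i l = D'.sheet b m ∩ p ⁻¹' V i := by
  have hzV : p z ∈ V i := (D.componentCover hVo hVc hVcover hVD).sheet_subset_preimage_base i l hz
  exact (eq_connectedComponentIn_of_mem_image l.2 hz).trans
    (D'.connectedComponentIn_preimage_eq (hVo i) (hVc i) hb hzV hzm)

theorem componentCover_refines (D' : CoverData p) (hVD' : ∀ i, ∃ b, V i ⊆ D'.base b) (i : ι)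
    (l : (D.componentCover hVo hVc hVcover hVD).Λ i) :
    ∃ b m, (D.componentCover hVo hVc hVcover hVD).sheet i l ⊆ D'.sheet b m := by
  obtain ⟨b, hb⟩ := hVD' i
  obtain ⟨z, hz, hzl⟩ := l.2
  obtain ⟨m, hm⟩ := D'.exists_mem_sheet (hb hz)
  exact ⟨b, m, (D.componentCover_sheet_eq hVo hVc hVcover hVD D' l hb
    (show z ∈ l.1 from hzl ▸ mem_connectedComponentIn hz) hm).trans_subset inter_subset_left⟩

theorem componentCover_overlay (hstar : ∀ i j, (V i ∩ V j).Nonempty → ∃ b, V i ∪ V j ⊆ D.base b)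
    (i j : ι) (l : (D.componentCover hVo hVc hVcover hVD).Λ i)
    (μ ν : (D.componentCover hVo hVc hVcover hVD).Λ j)
    (hμ : ((D.componentCover hVo hVc hVcover hVD).sheet i l ∩
      (D.componentCover hVo hVc hVcover hVD).sheet j μ).Nonempty)
    (hν : ((D.componentCover hVo hVc hVcover hVD).sheet i l ∩
      (D.componentCover hVo hVc hVcover hVD).sheet j ν).Nonempty) : μ = ν := by
  set C := D.componentCover hVo hVc hVcover hVD
  obtain ⟨z, hzl, hzμ⟩ := hμ
  obtain ⟨w, hwl, hwν⟩ := hν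
  obtain ⟨b, hb⟩ := hstar i j
    ⟨p z, C.sheet_subset_preimage_base i l hzl, C.sheet_subset_preimage_base j μ hzμ⟩
  obtain ⟨m, hm⟩ := D.exists_mem_sheet (hb (Or.inl (C.sheet_subset_preimage_base i l hzl)))
  have hl := D.componentCover_sheet_eq hVo hVc hVcover hVD D l (subset_union_left.trans hb) hzl hm
  have hwm : w ∈ D.sheet b m := (hl ▸ hwl).1
  exact Subtype.ext
    ((D.componentCover_sheet_eq hVo hVc hVcover hVD D μ (subset_union_right.trans hb) hzμ hm).trans
    (D.componentCover_sheet_eq hVo hVc hVcover hVD D ν (subset_union_right.trans hb) hwν hwm).symm)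

end componentCover

end CoverData

theorem CoverData.exists_overlayStructure_refines {E X : Type} [TopologicalSpace E]
    [MetricSpace X] [CompactSpace X] [LocallyConnectedSpace X] {p : E → X}
    (D D' : CoverData p) :
    ∃ O : OverlayStructure p, (∀ a l, ∃ b m, O.sheet a l ⊆ D.sheet b m) ∧
      ∀ a l, ∃ b m, O.sheet a l ⊆ D'.sheet b m := by
  obtain ⟨V, hVo, hVc, hxV, hstar⟩ :=
    exists_isOpen_isPreconnected_cover_pairwise_union_subset
      (U := fun k : D.ι × D'.ι => D.base k.1 ∩ D'.base k.2)
      (fun k => (D.base_open k.1).inter (D'.base_open k.2)) fun x =>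
      let ⟨b, hb⟩ := D.base_cover x
      let ⟨b', hb'⟩ := D'.base_cover x
      ⟨(b, b'), hb, hb'⟩
  have hstarD : ∀ x y, (V x ∩ V y).Nonempty → ∃ b, V x ∪ V y ⊆ D.base b := fun x y hxy =>
    let ⟨k, hk⟩ := hstar x y hxy
    ⟨k.1, hk.trans inter_subset_left⟩
  have hVD : ∀ x, ∃ b, V x ⊆ D.base b := fun x =>
    let ⟨b, hb⟩ := hstarD x x ⟨x, hxV x, hxV x⟩
    ⟨b, subset_union_left.trans hb⟩
  have hVD' : ∀ x, ∃ b, V x ⊆ D'.base b := fun x =>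
    let ⟨k, hk⟩ := hstar x x ⟨x, hxV x, hxV x⟩
    ⟨k.2, subset_union_left.trans (hk.trans inter_subset_right)⟩
  have hVcover : ∀ x, ∃ y, x ∈ V y := fun x => ⟨x, hxV x⟩
  exact ⟨{ D.componentCover hVo hVc hVcover hVD with
      overlay := D.componentCover_overlay hVo hVc hVcover hVD hstarD },
    D.componentCover_refines hVo hVc hVcover hVD D hVD,
    D.componentCover_refines hVo hVc hVcover hVD D' hVD'⟩

theorem overlayStructure_exists_unique_of_locallyConnected
    {E X : Type} [TopologicalSpace E] [MetricSpace X] [CompactSpace X]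
    [LocallyConnectedSpace X]
    (p : E → X)
    (hcov : Nonempty (CoverData p)) :
    Nonempty (OverlayStructure p) ∧
      ∀ O O' : OverlayStructure p, O.Equiv O' := by
  obtain ⟨D⟩ := hcov
  obtain ⟨O, -⟩ := D.exists_overlayStructure_refines D
  exact ⟨⟨O⟩, fun O O' => O.exists_overlayStructure_refines O'.toCoverData⟩
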